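/- Let I and J be finite sets of pairwise distinct labels and let σ_l (l ∈ I) and τ_l (l ∈ J) be types in 𝕋. Then ⟨l:σ_l | l ∈ I⟩ + ⟨l:τ_l | l ∈ J⟩ = ⟨l:σ_l, l′:τ_{l′} | l ∈ I∖J, l′ ∈ J⟩, i.e. the type-merge of two record types is the record type whose entries are σ_l on I∖J and τ_{l′} on all of J. -/

import Mathlib

/-- Intersection and record types `𝕋`. Record types are the types satisfying `IsRec`. -/
inductive Ty where
  | const : Nat → Ty
  | omega : Ty
  | arrow : Ty → Ty → Ty
  | inter : Ty → Ty → Ty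
  | empty : Ty
  | fld : Nat → Ty → Ty
  | merge : Ty → Ty → Ty
deriving DecidableEq

/-- The record types `𝕋_R ⊆ 𝕋`. -/
inductive IsRec : Ty → Prop where
  | empty : IsRec .empty
  | fld (l : Nat) (σ : Ty) : IsRec (.fld l σ)
  | merge {ρ₁ ρ₂ : Ty} : IsRec ρ₁ → IsRec ρ₂ → IsRec (.merge ρ₁ ρ₂)
  | inter {ρ₁ ρ₂ : Ty} : IsRec ρ₁ → IsRec ρ₂ → IsRec (.inter ρ₁ ρ₂)

/-- Subtyping on `𝕋`: the least preorder satisfying the BCD axioms together with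
the record and record-merge axioms. -/
inductive TySub : Ty → Ty → Prop where
  | refl (σ : Ty) : TySub σ σ
  | trans {σ τ υ : Ty} : TySub σ τ → TySub τ υ → TySub σ υ
  | le_omega (σ : Ty) : TySub σ .omega
  | omega_arrow : TySub .omega (.arrow .omega .omega)
  | inter_left (σ τ : Ty) : TySub (.inter σ τ) σ
  | inter_right (σ τ : Ty) : TySub (.inter σ τ) τ
  | le_inter {σ τ₁ τ₂ : Ty} : TySub σ τ₁ → TySub σ τ₂ → TySub σ (.inter τ₁ τ₂)
  | arrow_inter (σ τ₁ τ₂ : Ty) :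
      TySub (.inter (.arrow σ τ₁) (.arrow σ τ₂)) (.arrow σ (.inter τ₁ τ₂))
  | arrow_mono {σ₁ σ₂ τ₁ τ₂ : Ty} : TySub σ₂ σ₁ → TySub τ₁ τ₂ →
      TySub (.arrow σ₁ τ₁) (.arrow σ₂ τ₂)
  | fld_empty (l : Nat) (σ : Ty) : TySub (.fld l σ) .empty
  | fld_inter (l : Nat) (σ τ : Ty) :
      TySub (.inter (.fld l σ) (.fld l τ)) (.fld l (.inter σ τ))
  | fld_mono {σ τ : Ty} (l : Nat) : TySub σ τ → TySub (.fld l σ) (.fld l τ)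
  | merge_empty_r {ρ : Ty} : IsRec ρ → TySub (.merge ρ .empty) ρ
  | merge_empty_r' {ρ : Ty} : IsRec ρ → TySub ρ (.merge ρ .empty)
  | merge_empty_l {ρ : Ty} : IsRec ρ → TySub (.merge .empty ρ) ρ
  | merge_empty_l' {ρ : Ty} : IsRec ρ → TySub ρ (.merge .empty ρ)
  | merge_assoc {ρ₁ ρ₂ ρ₃ : Ty} : IsRec ρ₁ → IsRec ρ₂ → IsRec ρ₃ →
      TySub (.merge (.merge ρ₁ ρ₂) ρ₃) (.merge ρ₁ (.merge ρ₂ ρ₃))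
  | merge_assoc' {ρ₁ ρ₂ ρ₃ : Ty} : IsRec ρ₁ → IsRec ρ₂ → IsRec ρ₃ →
      TySub (.merge ρ₁ (.merge ρ₂ ρ₃)) (.merge (.merge ρ₁ ρ₂) ρ₃)
  | merge_inter {ρ₁ ρ₂ ρ₃ : Ty} : IsRec ρ₁ → IsRec ρ₂ → IsRec ρ₃ →
      TySub (.merge (.inter ρ₁ ρ₂) ρ₃) (.inter (.merge ρ₁ ρ₃) (.merge ρ₂ ρ₃))
  | merge_inter' {ρ₁ ρ₂ ρ₃ : Ty} : IsRec ρ₁ → IsRec ρ₂ → IsRec ρ₃ →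
      TySub (.inter (.merge ρ₁ ρ₃) (.merge ρ₂ ρ₃)) (.merge (.inter ρ₁ ρ₂) ρ₃)
  | fld_absorb {ρ : Ty} (l : Nat) (σ τ : Ty) : IsRec ρ →
      TySub (.merge (.fld l σ) (.inter (.fld l τ) ρ)) (.inter (.fld l τ) ρ)
  | fld_absorb' {ρ : Ty} (l : Nat) (σ τ : Ty) : IsRec ρ →
      TySub (.inter (.fld l τ) ρ) (.merge (.fld l σ) (.inter (.fld l τ) ρ))
  | fld_comm {ρ : Ty} {l l' : Nat} (σ τ : Ty) : l ≠ l' → IsRec ρ →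
      TySub (.merge (.fld l σ) (.inter (.fld l' τ) ρ))
          (.inter (.fld l' τ) (.merge (.fld l σ) ρ))
  | fld_comm' {ρ : Ty} {l l' : Nat} (σ τ : Ty) : l ≠ l' → IsRec ρ →
      TySub (.inter (.fld l' τ) (.merge (.fld l σ) ρ))
          (.merge (.fld l σ) (.inter (.fld l' τ) ρ))
  | merge_mono_l {ρ₁ ρ₂ ρ : Ty} : IsRec ρ₁ → IsRec ρ₂ → IsRec ρ →
      TySub ρ₁ ρ₂ → TySub (.merge ρ₁ ρ) (.merge ρ₂ ρ)
  | merge_congr_r {ρ ρ₁ ρ₂ : Ty} : IsRec ρ → IsRec ρ₁ → IsRec ρ₂ →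
      TySub ρ₁ ρ₂ → TySub ρ₂ ρ₁ → TySub (.merge ρ ρ₁) (.merge ρ ρ₂)

/-- Type equality: mutual subtyping. -/
def TyEq (σ τ : Ty) : Prop := TySub σ τ ∧ TySub τ σ
/-- `⟨l : σ_l | l ∈ I⟩`: the intersection of unary record types over a list of labels. -/
def recTy (σ : Nat → Ty) : List Nat → Ty
  | [] => .empty
  | [l] => .fld l (σ l)
  | l :: l' :: ls => .inter (.fld l (σ l)) (recTy σ (l' :: ls))

/-!
Induction on `I`. The merge distributes over the intersection on its left, and a single field
`⟨l:s⟩` merged into `⟨l':τ_l' | l' ∈ J⟩` is absorbed when `l ∈ J`, while otherwise it commutes past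
every field and becomes an intersection. The right-hand side is identified with
`⟨l:σ_l | l ∈ I∖J⟩ ∩ ⟨l:τ_l | l ∈ J⟩` because a record type `⟨l:σ_l | l ∈ L⟩` is the greatest lower
bound of `⟨⟩` and its fields `⟨l:σ_l⟩`.
-/

infix:50 " =ₜ " => TyEq

namespace TyEq

@[refl] theorem refl (σ : Ty) : σ =ₜ σ := ⟨.refl σ, .refl σ⟩

@[symm] theorem symm {σ τ : Ty} (h : σ =ₜ τ) : τ =ₜ σ := ⟨h.2, h.1⟩

theorem trans {σ τ υ : Ty} (h₁ : σ =ₜ τ) (h₂ : τ =ₜ υ) : σ =ₜ υ :=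
  ⟨h₁.1.trans h₂.1, h₂.2.trans h₁.2⟩

instance : Trans TyEq TyEq TyEq := ⟨TyEq.trans⟩

theorem inter_congr {a b c d : Ty} (h₁ : a =ₜ b) (h₂ : c =ₜ d) :
    .inter a c =ₜ .inter b d :=
  ⟨.le_inter ((TySub.inter_left a c).trans h₁.1) ((TySub.inter_right a c).trans h₂.1),
   .le_inter ((TySub.inter_left b d).trans h₁.2) ((TySub.inter_right b d).trans h₂.2)⟩

theorem inter_of_le_left {a b : Ty} (h : TySub a b) : .inter a b =ₜ a :=
  ⟨.inter_left a b, .le_inter (.refl a) h⟩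

theorem inter_of_le_right {a b : Ty} (h : TySub b a) : .inter a b =ₜ b :=
  ⟨.inter_right a b, .le_inter h (.refl b)⟩

theorem inter_left_comm (a b c : Ty) :
    .inter a (.inter b c) =ₜ .inter b (.inter a c) :=
  ⟨.le_inter ((TySub.inter_right _ _).trans (.inter_left _ _))
      (.le_inter (.inter_left _ _) ((TySub.inter_right _ _).trans (.inter_right _ _))),
   .le_inter ((TySub.inter_right _ _).trans (.inter_left _ _))
      (.le_inter (.inter_left _ _) ((TySub.inter_right _ _).trans (.inter_right _ _)))⟩

theorem inter_inter_distrib_right (a b c : Ty) :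
    .inter (.inter a b) c =ₜ .inter (.inter a c) (.inter b c) :=
  ⟨.le_inter (.le_inter ((TySub.inter_left _ _).trans (.inter_left _ _)) (.inter_right _ _))
      (.le_inter ((TySub.inter_left _ _).trans (.inter_right _ _)) (.inter_right _ _)),
   .le_inter (.le_inter ((TySub.inter_left _ _).trans (.inter_left _ _))
      ((TySub.inter_right _ _).trans (.inter_left _ _))) ((TySub.inter_left _ _).trans
      (.inter_right _ _))⟩

theorem merge_congr {a b c d : Ty} (ha : IsRec a) (hb : IsRec b) (hc : IsRec c)
    (hd : IsRec d) (h₁ : a =ₜ b) (h₂ : c =ₜ d) :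
    .merge a c =ₜ .merge b d :=
  ⟨(TySub.merge_mono_l ha hb hc h₁.1).trans (.merge_congr_r hb hc hd h₂.1 h₂.2),
   (TySub.merge_mono_l hb ha hd h₁.2).trans (.merge_congr_r ha hd hc h₂.2 h₂.1)⟩

end TyEq

theorem isRec_recTy (σ : Nat → Ty) : ∀ L, IsRec (recTy σ L)
  | [] => .empty
  | [l] => .fld l (σ l)
  | _ :: l' :: ls => .inter (.fld _ _) (isRec_recTy σ (l' :: ls))

theorem recTy_cons (σ : Nat → Ty) (l : Nat) (ls : List Nat) :
    recTy σ (l :: ls) =ₜ .inter (.fld l (σ l)) (recTy σ ls) := by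
  cases ls with
  | nil => exact (TyEq.inter_of_le_left (.fld_empty l (σ l))).symm
  | cons l' ls => rfl

theorem recTy_le_empty (σ : Nat → Ty) : ∀ L, TySub (recTy σ L) .empty
  | [] => .refl _
  | [l] => .fld_empty l (σ l)
  | _ :: l' :: ls => (TySub.inter_right _ _).trans (recTy_le_empty σ (l' :: ls))

theorem recTy_le_fld (σ : Nat → Ty) : ∀ {L l}, l ∈ L → TySub (recTy σ L) (.fld l (σ l))
  | l' :: ls, l, h => by
    refine (recTy_cons σ l' ls).1.trans ?_
    rcases List.mem_cons.mp h with rfl | h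
    · exact .inter_left _ _
    · exact (TySub.inter_right _ _).trans (recTy_le_fld σ h)

theorem le_recTy {X : Ty} {σ : Nat → Ty} :
    ∀ {L}, TySub X .empty → (∀ l ∈ L, TySub X (.fld l (σ l))) → TySub X (recTy σ L)
  | [], he, _ => he
  | l :: ls, he, h =>
    (TySub.le_inter (h l List.mem_cons_self)
      (le_recTy he fun x hx => h x (List.mem_cons_of_mem _ hx))).trans (recTy_cons σ l ls).2

theorem recTy_ite_append (σ τ : Nat → Ty) {L J : List Nat} (hLJ : ∀ l ∈ L, l ∉ J) :
    recTy (fun l => if l ∈ J then τ l else σ l) (L ++ J) =ₜ .inter (recTy σ L) (recTy τ J) := by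
  refine ⟨.le_inter (le_recTy (recTy_le_empty _ _) fun l hl => ?_)
      (le_recTy (recTy_le_empty _ _) fun l hl => ?_),
    le_recTy ((TySub.inter_left _ _).trans (recTy_le_empty _ _)) fun l hl => ?_⟩
  · simpa [hLJ l hl] using
      recTy_le_fld (fun l => if l ∈ J then τ l else σ l) (List.mem_append_left J hl)
  · simpa [hl] using
      recTy_le_fld (fun l => if l ∈ J then τ l else σ l) (List.mem_append_right L hl)
  · by_cases hlJ : l ∈ J
    · simpa [hlJ] using (TySub.inter_right _ _).trans (recTy_le_fld τ hlJ)
    · simpa [hlJ] using (TySub.inter_left _ _).trans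
        (recTy_le_fld σ ((List.mem_append.mp hl).resolve_right hlJ))

section MergeField

variable {l : Nat} (s : Ty) (τ : Nat → Ty)

theorem merge_fld_recTy_cons (l' : Nat) (ls : List Nat) :
    .merge (.fld l s) (recTy τ (l' :: ls)) =ₜ
      .merge (.fld l s) (.inter (.fld l' (τ l')) (recTy τ ls)) :=
  TyEq.merge_congr (.fld _ _) (.fld _ _) (isRec_recTy τ _)
    (.inter (.fld _ _) (isRec_recTy τ ls)) (.refl _) (recTy_cons τ l' ls)

theorem merge_fld_recTy_cons_of_ne {l' : Nat} (ls : List Nat) (hl : l ≠ l') :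
    .merge (.fld l s) (recTy τ (l' :: ls)) =ₜ
      .inter (.fld l' (τ l')) (.merge (.fld l s) (recTy τ ls)) :=
  (merge_fld_recTy_cons s τ l' ls).trans
    ⟨.fld_comm s (τ l') hl (isRec_recTy τ ls), .fld_comm' s (τ l') hl (isRec_recTy τ ls)⟩

theorem merge_fld_recTy_of_mem : ∀ {J}, l ∈ J →
    .merge (.fld l s) (recTy τ J) =ₜ recTy τ J
  | l' :: ls, h => by
    by_cases hl : l = l'
    · subst hl
      have hρ := isRec_recTy τ ls
      exact (merge_fld_recTy_cons s τ l ls).trans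
        ((TyEq.trans ⟨.fld_absorb l s (τ l) hρ, .fld_absorb' l s (τ l) hρ⟩
          (recTy_cons τ l ls).symm))
    · calc Ty.merge (.fld l s) (recTy τ (l' :: ls))
            =ₜ .inter (.fld l' (τ l')) (.merge (.fld l s) (recTy τ ls)) :=
              merge_fld_recTy_cons_of_ne s τ ls hl
        _ =ₜ .inter (.fld l' (τ l')) (recTy τ ls) :=
              TyEq.inter_congr (.refl _)
                (merge_fld_recTy_of_mem ((List.mem_cons.mp h).resolve_left hl))
        _ =ₜ recTy τ (l' :: ls) := (recTy_cons τ l' ls).symm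

theorem merge_fld_recTy_of_not_mem : ∀ {J}, l ∉ J →
    .merge (.fld l s) (recTy τ J) =ₜ .inter (.fld l s) (recTy τ J)
  | [], _ =>
    ⟨(TySub.merge_empty_r (.fld l s)).trans (TyEq.inter_of_le_left (.fld_empty l s)).2,
     (TySub.inter_left _ _).trans (.merge_empty_r' (.fld l s))⟩
  | l' :: ls, h => by
    rw [List.mem_cons, not_or] at h
    calc Ty.merge (.fld l s) (recTy τ (l' :: ls))
          =ₜ .inter (.fld l' (τ l')) (.merge (.fld l s) (recTy τ ls)) :=
            merge_fld_recTy_cons_of_ne s τ ls h.1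
      _ =ₜ .inter (.fld l' (τ l')) (.inter (.fld l s) (recTy τ ls)) :=
            TyEq.inter_congr (.refl _) (merge_fld_recTy_of_not_mem h.2)
      _ =ₜ .inter (.fld l s) (.inter (.fld l' (τ l')) (recTy τ ls)) :=
            TyEq.inter_left_comm _ _ _
      _ =ₜ .inter (.fld l s) (recTy τ (l' :: ls)) :=
            TyEq.inter_congr (.refl _) (recTy_cons τ l' ls).symm

end MergeField

theorem merge_recTy (σ τ : Nat → Ty) (J : List Nat) : ∀ I : List Nat,
    .merge (recTy σ I) (recTy τ J) =ₜ
      .inter (recTy σ (I.filter (fun l => decide (l ∉ J)))) (recTy τ J)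
  | [] => ⟨(TySub.merge_empty_l (isRec_recTy τ J)).trans
        (TyEq.inter_of_le_right (recTy_le_empty τ J)).2,
      (TyEq.inter_of_le_right (recTy_le_empty τ J)).1.trans (.merge_empty_l' (isRec_recTy τ J))⟩
  | l :: ls => by
    have hJ := isRec_recTy τ J
    have hls := isRec_recTy σ ls
    have hsplit : Ty.merge (recTy σ (l :: ls)) (recTy τ J) =ₜ
        .inter (.merge (.fld l (σ l)) (recTy τ J)) (.merge (recTy σ ls) (recTy τ J)) :=
      (TyEq.merge_congr (isRec_recTy σ _) (.inter (.fld _ _) hls) hJ hJ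
        (recTy_cons σ l ls) (.refl _)).trans
        ⟨.merge_inter (.fld _ _) hls hJ, .merge_inter' (.fld _ _) hls hJ⟩
    refine hsplit.trans ?_
    by_cases hlJ : l ∈ J
    · rw [List.filter_cons_of_neg (by simpa using hlJ)]
      exact (TyEq.inter_congr (merge_fld_recTy_of_mem _ τ hlJ) (merge_recTy σ τ J ls)).trans
        (TyEq.inter_of_le_right (.inter_right _ _))
    · rw [List.filter_cons_of_pos (by simpa using hlJ)]
      calc _ =ₜ .inter (.inter (.fld l (σ l)) (recTy τ J))
              (.inter (recTy σ (ls.filter (fun l => decide (l ∉ J)))) (recTy τ J)) :=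
            TyEq.inter_congr (merge_fld_recTy_of_not_mem _ τ hlJ) (merge_recTy σ τ J ls)
        _ =ₜ .inter (.inter (.fld l (σ l)) (recTy σ (ls.filter (fun l => decide (l ∉ J)))))
              (recTy τ J) := (TyEq.inter_inter_distrib_right _ _ _).symm
        _ =ₜ _ := TyEq.inter_congr (recTy_cons σ l _).symm (.refl _)

theorem record_merge_general (I J : List Nat)
    (σ τ : Nat → Ty) :
    TyEq (.merge (recTy σ I) (recTy τ J))
      (recTy (fun l => if l ∈ J then τ l else σ l)
        (I.filter (fun l => decide (l ∉ J)) ++ J)) :=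
  (merge_recTy σ τ J I).trans
    (recTy_ite_append σ τ fun l hl => by simpa using (List.mem_filter.mp hl).2).symm

/-- Type-merge of two record types: entries `σ_l` on `I∖J` and `τ_l` on all of `J`. -/
theorem record_merge (I J : List Nat) (hI : I.Nodup) (hJ : J.Nodup)
    (σ τ : Nat → Ty) :
    TyEq (.merge (recTy σ I) (recTy τ J))
      (recTy (fun l => if l ∈ J then τ l else σ l)
        (I.filter (fun l => decide (l ∉ J)) ++ J)) :=
  record_merge_general I J σ τ
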